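/- arXiv:2412.11904 — 8 statements merged into one kernel-verified Lean document; each statement's English description precedes it below -/
import Mathlib

section
/- Let d ≥ 1, T > 0 and ν, γ > 0. Suppose p : ℝ^d × (0,T) → ℝ, u : ℝ^d × (0,T) → ℝ^d and c : ℝ^d × (0,T) → ℝ are smooth (say C^∞) functions that satisfy, at every point of an open set U ⊆ ℝ^d × (0,T), the Navier–Stokes–Cahn–Hilliard equations: div u = 0; ∂_t u + (u·∇)u + ∇p = −c ∇μ + ν Δu; ∂_t c + div(c u) = Δμ, where μ := W′(c) − γ Δc. Then at every point of U the pointwise energy balance holds: ∂_t( |u|²/2 + W(c) + (γ/2)|∇c|² ) + div( (p + |u|²/2) u + c μ u − μ ∇μ − γ (∂_t c) ∇c ) = −|∇μ|² + ν (Δu)·u. -/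
open scoped BigOperators

/-- Time partial derivative of a function of `(x, t) ∈ ℝ^d × ℝ`. -/
noncomputable def ptime {d : ℕ} (f : (Fin d → ℝ) × ℝ → ℝ) (z : (Fin d → ℝ) × ℝ) : ℝ :=
  fderiv ℝ f z (0, 1)

/-- Spatial partial derivative in direction `i` of a function of `(x, t) ∈ ℝ^d × ℝ`. -/
noncomputable def pspace {d : ℕ} (i : Fin d) (f : (Fin d → ℝ) × ℝ → ℝ)
    (z : (Fin d → ℝ) × ℝ) : ℝ :=
  fderiv ℝ f z (Pi.single i 1, 0)

noncomputable def dd {d : ℕ} (v : (Fin d → ℝ) × ℝ) (f : (Fin d → ℝ) × ℝ → ℝ)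
    (z : (Fin d → ℝ) × ℝ) : ℝ := fderiv ℝ f z v

section DDLemmas

variable {d : ℕ} {f g : (Fin d → ℝ) × ℝ → ℝ} {z v : (Fin d → ℝ) × ℝ}

lemma ptime_eq (f : (Fin d → ℝ) × ℝ → ℝ) : ptime f = dd (0, 1) f := rfl

lemma pspace_eq (i : Fin d) (f : (Fin d → ℝ) × ℝ → ℝ) :
    pspace i f = dd (Pi.single i 1, 0) f := rfl

lemma contDiff_dd (hf : ContDiff ℝ (⊤ : ℕ∞) f) (v : (Fin d → ℝ) × ℝ) :
    ContDiff ℝ (⊤ : ℕ∞) (dd v f) := by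
  have h : ContDiff ℝ (⊤ : ℕ∞) (fderiv ℝ f) := hf.fderiv_right (by simp)
  exact (ContinuousLinearMap.apply ℝ ℝ v).contDiff.comp h

lemma dd_eq_snd (hf : ContDiff ℝ (⊤ : ℕ∞) f) (v w z) :
    dd v (dd w f) z = fderiv ℝ (fderiv ℝ f) z v w := by
  have h2 : HasFDerivAt (fderiv ℝ f) (fderiv ℝ (fderiv ℝ f) z) z :=
    ((hf.fderiv_right (m := ((⊤ : ℕ∞) : WithTop ℕ∞)) (by simp)).differentiable (by simp) z).hasFDerivAt
  have h3 : HasFDerivAt (fun y => (ContinuousLinearMap.apply ℝ ℝ w) (fderiv ℝ f y))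
      ((ContinuousLinearMap.apply ℝ ℝ w).comp (fderiv ℝ (fderiv ℝ f) z)) z :=
    ((ContinuousLinearMap.apply ℝ ℝ w).hasFDerivAt).comp z h2
  have h4 : dd w f = fun y => (ContinuousLinearMap.apply ℝ ℝ w) (fderiv ℝ f y) := rfl
  rw [dd, h4, h3.fderiv]
  rfl

lemma dd_comm (hf : ContDiff ℝ (⊤ : ℕ∞) f) (v w z) :
    dd v (dd w f) z = dd w (dd v f) z := by
  rw [dd_eq_snd hf, dd_eq_snd hf]
  exact second_derivative_symmetric (fun y => (hf.differentiable (by simp) y).hasFDerivAt)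
    (((hf.fderiv_right (m := ((⊤ : ℕ∞) : WithTop ℕ∞)) (by simp)).differentiable (by simp) z).hasFDerivAt) v w

lemma dd_add (hf : DifferentiableAt ℝ f z) (hg : DifferentiableAt ℝ g z) :
    dd v (fun w => f w + g w) z = dd v f z + dd v g z := by
  simp [dd, fderiv_fun_add hf hg]

lemma dd_sub (hf : DifferentiableAt ℝ f z) (hg : DifferentiableAt ℝ g z) :
    dd v (fun w => f w - g w) z = dd v f z - dd v g z := by
  simp [dd, fderiv_fun_sub hf hg]

lemma dd_mul (hf : DifferentiableAt ℝ f z) (hg : DifferentiableAt ℝ g z) :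
    dd v (fun w => f w * g w) z = dd v f z * g z + f z * dd v g z := by
  simp [dd, fderiv_fun_mul hf hg]; ring

lemma dd_sq (hf : DifferentiableAt ℝ f z) :
    dd v (fun w => f w ^ 2) z = 2 * f z * dd v f z := by
  have h : (fun w => f w ^ 2) = fun w => f w * f w := by funext w; ring
  rw [h, dd_mul hf hf]; ring

lemma dd_const (a : ℝ) : dd v (fun _ => a) z = 0 := by simp [dd]

lemma dd_const_mul (a : ℝ) (hf : DifferentiableAt ℝ f z) :
    dd v (fun w => a * f w) z = a * dd v f z := by
  simp [dd, fderiv_const_mul hf]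

lemma dd_div_const (a : ℝ) (hf : DifferentiableAt ℝ f z) :
    dd v (fun w => f w / a) z = dd v f z / a := by
  have h : (fun w => f w / a) = fun w => f w * a⁻¹ := by funext w; rw [div_eq_mul_inv]
  rw [h]
  simp [dd, fderiv_mul_const hf, div_eq_mul_inv]; ring

lemma dd_sum {F : Fin d → ((Fin d → ℝ) × ℝ → ℝ)} (hF : ∀ i, DifferentiableAt ℝ (F i) z) :
    dd v (fun w => ∑ i, F i w) z = ∑ i, dd v (F i) z := by
  simp [dd, fderiv_fun_sum (fun i _ => hF i)]

lemma dd_sub_const (a : ℝ) (hf : DifferentiableAt ℝ f z) :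
    dd v (fun w => f w - a) z = dd v f z := by
  rw [dd_sub hf (differentiableAt_const a), dd_const, sub_zero]

end DDLemmas

lemma key_algebra {n : ℕ} (γ ν P C M DtC : ℝ)
    (Ui DtU DP DC DtDC D2C DM D2M LapU : Fin n → ℝ) (DU : Fin n → Fin n → ℝ)
    (hdiv : ∑ i, DU i i = 0)
    (hmom : ∀ i, DtU i + (∑ j, Ui j * DU j i) + DP i = -(C * DM i) + ν * LapU i)
    (hch : DtC + (∑ i, (DC i * Ui i + C * DU i i)) = ∑ i, D2M i)
    (hM : M = (C ^ 3 - C) - γ * ∑ i, D2C i) :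
    ((∑ i, Ui i * DtU i) + (C ^ 3 - C) * DtC + γ * ∑ i, DC i * DtDC i)
    + (∑ i, (DP i * Ui i + P * DU i i + (∑ j, Ui j * DU i j) * Ui i
        + ((∑ j, (Ui j) ^ 2) / 2) * DU i i
        + ((DC i * M + C * DM i) * Ui i + C * M * DU i i)
        - (DM i * DM i + M * D2M i)
        - γ * (DtDC i * DC i + DtC * D2C i)))
    = -(∑ i, (DM i) ^ 2) + ν * ∑ i, LapU i * Ui i := by
  have H1 : ∑ i, (Ui i * DtU i + Ui i * (∑ j, Ui j * DU j i) + Ui i * DP i)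
      = ∑ i, (-(C * (Ui i * DM i)) + ν * (LapU i * Ui i)) :=
    Finset.sum_congr rfl fun i _ => by linear_combination Ui i * hmom i
  simp only [Finset.sum_add_distrib, Finset.sum_neg_distrib, ← Finset.mul_sum] at H1
  have HD : ∑ i, Ui i * (∑ j, Ui j * DU j i) = ∑ i, (∑ j, Ui j * DU i j) * Ui i := by
    simp only [Finset.mul_sum, Finset.sum_mul]
    rw [Finset.sum_comm]
    exact Finset.sum_congr rfl fun i _ => Finset.sum_congr rfl fun j _ => by ring
  rw [HD] at H1
  have H2 : DtC + ((∑ i, DC i * Ui i) + C * ∑ i, DU i i) = ∑ i, D2M i := by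
    rw [← hch]; simp [Finset.sum_add_distrib, Finset.mul_sum]
  have H3 : (∑ i, (DP i * Ui i + P * DU i i + (∑ j, Ui j * DU i j) * Ui i
        + ((∑ j, (Ui j) ^ 2) / 2) * DU i i
        + ((DC i * M + C * DM i) * Ui i + C * M * DU i i)
        - (DM i * DM i + M * D2M i)
        - γ * (DtDC i * DC i + DtC * D2C i)))
      = (∑ i, Ui i * DP i) + P * (∑ i, DU i i) + (∑ i, (∑ j, Ui j * DU i j) * Ui i)
        + ((∑ j, (Ui j) ^ 2) / 2) * (∑ i, DU i i)
        + M * (∑ i, DC i * Ui i) + C * (∑ i, Ui i * DM i) + C * M * (∑ i, DU i i)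
        - (∑ i, (DM i) ^ 2) - M * (∑ i, D2M i)
        - γ * (∑ i, DC i * DtDC i) - (γ * DtC) * (∑ i, D2C i) := by
    have e : ∀ i : Fin n, (DP i * Ui i + P * DU i i + (∑ j, Ui j * DU i j) * Ui i
        + ((∑ j, (Ui j) ^ 2) / 2) * DU i i
        + ((DC i * M + C * DM i) * Ui i + C * M * DU i i)
        - (DM i * DM i + M * D2M i)
        - γ * (DtDC i * DC i + DtC * D2C i))
        = Ui i * DP i + P * DU i i + (∑ j, Ui j * DU i j) * Ui i
        + ((∑ j, (Ui j) ^ 2) / 2) * DU i i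
        + M * (DC i * Ui i) + C * (Ui i * DM i) + C * M * DU i i
        - (DM i) ^ 2 - M * D2M i - γ * (DC i * DtDC i) - (γ * DtC) * D2C i := fun i => by ring
    rw [Finset.sum_congr rfl fun i _ => e i]
    simp only [Finset.sum_sub_distrib, Finset.sum_add_distrib, ← Finset.mul_sum]
  rw [H3]
  linear_combination H1 + M * H2 + (P + (∑ j, (Ui j) ^ 2) / 2 + C * M - M * C) * hdiv
    - DtC * hM

/-- Pointwise energy balance for classical solutions of the
Navier–Stokes–Cahn–Hilliard system, with quartic double-well free energy
`W(c) = (1/4)(c² − 1)²` and chemical potential `μ = W′(c) − γ Δc`. -/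
theorem nsch_pointwise_energy_balance
    {d : ℕ} (hd : 1 ≤ d) (T ν γ : ℝ) (hT : 0 < T) (hν : 0 < ν) (hγ : 0 < γ)
    (p c : (Fin d → ℝ) × ℝ → ℝ) (u : Fin d → ((Fin d → ℝ) × ℝ → ℝ))
    (hp : ContDiff ℝ (⊤ : ℕ∞) p) (hc : ContDiff ℝ (⊤ : ℕ∞) c) (hu : ∀ i, ContDiff ℝ (⊤ : ℕ∞) (u i))
    (U : Set ((Fin d → ℝ) × ℝ)) (hU : IsOpen U)
    (hUT : ∀ z ∈ U, 0 < z.2 ∧ z.2 < T)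
    (μ : (Fin d → ℝ) × ℝ → ℝ)
    (hμ : μ = fun z => ((c z) ^ 3 - c z) - γ * ∑ i, pspace i (pspace i c) z)
    -- divergence constraint: div u = 0
    (hdiv : ∀ z ∈ U, ∑ i, pspace i (u i) z = 0)
    -- momentum equation: ∂ₜu + (u·∇)u + ∇p = −c ∇μ + ν Δu
    (hmom : ∀ z ∈ U, ∀ i,
      ptime (u i) z + (∑ j, u j z * pspace j (u i) z) + pspace i p z
        = -(c z * pspace i μ z) + ν * ∑ j, pspace j (pspace j (u i)) z)
    -- phase-field equation: ∂ₜc + div(c u) = Δμ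
    (hch : ∀ z ∈ U,
      ptime c z + (∑ i, pspace i (fun w => c w * u i w) z)
        = ∑ i, pspace i (pspace i μ) z) :
    ∀ z ∈ U,
      ptime (fun w => (∑ i, (u i w) ^ 2) / 2 + (1 / 4) * ((c w) ^ 2 - 1) ^ 2
          + (γ / 2) * ∑ i, (pspace i c w) ^ 2) z
      + ∑ i, pspace i (fun w =>
            (p w + (∑ j, (u j w) ^ 2) / 2) * u i w + c w * μ w * u i w
              - μ w * pspace i μ w - γ * ptime c w * pspace i c w) z
      = -(∑ i, (pspace i μ z) ^ 2)
          + ν * ∑ i, (∑ j, pspace j (pspace j (u i)) z) * u i z := by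
  intro z hz
  -- smoothness of μ
  have hμs : ContDiff ℝ (⊤ : ℕ∞) μ := by
    rw [hμ]
    simp only [pspace_eq]
    exact ((hc.pow 3).sub hc).sub (contDiff_const.mul
      (ContDiff.sum fun i _ => contDiff_dd (contDiff_dd hc _) _))
  -- differentiability facts for fun_prop
  have Dp : Differentiable ℝ p := hp.differentiable (by simp)
  have Dc : Differentiable ℝ c := hc.differentiable (by simp)
  have Du : ∀ i, Differentiable ℝ (u i) := fun i => (hu i).differentiable (by simp)
  have Dμ : Differentiable ℝ μ := hμs.differentiable (by simp)
  have Ddc : ∀ v, Differentiable ℝ (dd v c) := fun v =>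
    (contDiff_dd hc v).differentiable (by simp)
  have Ddμ : ∀ v, Differentiable ℝ (dd v μ) := fun v =>
    (contDiff_dd hμs v).differentiable (by simp)
  have Ddu : ∀ i v, Differentiable ℝ (dd v (u i)) := fun i v =>
    (contDiff_dd (hu i) v).differentiable (by simp)
  -- hypotheses at z in dd language
  have hdiv' := hdiv z hz
  have hmom' := hmom z hz
  have hch' := hch z hz
  simp only [pspace_eq, ptime_eq] at hdiv' hmom' hch' hμ ⊢
  -- expand the chain-rule hypothesis
  have hch'' : dd (0, 1) c z
      + ∑ i, (dd (Pi.single i 1, 0) c z * u i z + c z * dd (Pi.single i 1, 0) (u i) z)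
      = ∑ i, dd (Pi.single i 1, 0) (dd (Pi.single i 1, 0) μ) z := by
    rw [← hch']
    congr 1
    exact Finset.sum_congr rfl fun i _ => (dd_mul (Dc z) (Du i z)).symm
  have hMz : μ z = ((c z) ^ 3 - c z)
      - γ * ∑ i, dd (Pi.single i 1, 0) (dd (Pi.single i 1, 0) c) z := by
    rw [hμ]
  -- commutation of time and space derivatives of c
  have hcomm : ∀ i : Fin d, dd (0, 1) (dd (Pi.single i 1, 0) c) z
      = dd (Pi.single i 1, 0) (dd (0, 1) c) z := fun i => dd_comm hc _ _ z
  -- expand all derivatives in the goal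
  simp (disch := fun_prop) only [dd_add, dd_sub, dd_mul, dd_sq, dd_const, dd_const_mul,
    dd_div_const, dd_sum, dd_sub_const]
  -- normalize the factor-2 sums
  have e2 : ∀ v : (Fin d → ℝ) × ℝ, (∑ j, 2 * u j z * dd v (u j) z)
      = 2 * ∑ j, u j z * dd v (u j) z := fun v => by
    rw [Finset.mul_sum]; exact Finset.sum_congr rfl fun j _ => by ring
  have e3 : (∑ x : Fin d, 2 * dd (Pi.single x 1, 0) c z * dd (Pi.single x 1, 0) (dd (0, 1) c) z)
      = 2 * ∑ x : Fin d, dd (Pi.single x 1, 0) c z * dd (Pi.single x 1, 0) (dd (0, 1) c) z := by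
    rw [Finset.mul_sum]; exact Finset.sum_congr rfl fun j _ => by ring
  simp only [hcomm, e2, e3]
  -- rewrite the flux sum into the canonical shape
  have fluxeq : ∀ x : Fin d,
      ((dd (Pi.single x 1, 0) p z + (2 * ∑ j, u j z * dd (Pi.single x 1, 0) (u j) z) / 2) * u x z +
          (p z + (∑ j, u j z ^ 2) / 2) * dd (Pi.single x 1, 0) (u x) z +
        ((dd (Pi.single x 1, 0) c z * μ z + c z * dd (Pi.single x 1, 0) μ z) * u x z +
          c z * μ z * dd (Pi.single x 1, 0) (u x) z) -
        (dd (Pi.single x 1, 0) μ z * dd (Pi.single x 1, 0) μ z +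
          μ z * dd (Pi.single x 1, 0) (dd (Pi.single x 1, 0) μ) z) -
        ((0 * dd (0, 1) c z + γ * dd (Pi.single x 1, 0) (dd (0, 1) c) z) * dd (Pi.single x 1, 0) c z +
          γ * dd (0, 1) c z * dd (Pi.single x 1, 0) (dd (Pi.single x 1, 0) c) z))
      = (dd (Pi.single x 1, 0) p z * u x z + p z * dd (Pi.single x 1, 0) (u x) z
          + (∑ j, u j z * dd (Pi.single x 1, 0) (u j) z) * u x z
          + ((∑ j, (u j z) ^ 2) / 2) * dd (Pi.single x 1, 0) (u x) z
          + ((dd (Pi.single x 1, 0) c z * μ z + c z * dd (Pi.single x 1, 0) μ z) * u x z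
              + c z * μ z * dd (Pi.single x 1, 0) (u x) z)
          - (dd (Pi.single x 1, 0) μ z * dd (Pi.single x 1, 0) μ z
              + μ z * dd (Pi.single x 1, 0) (dd (Pi.single x 1, 0) μ) z)
          - γ * (dd (Pi.single x 1, 0) (dd (0, 1) c) z * dd (Pi.single x 1, 0) c z
              + dd (0, 1) c z * dd (Pi.single x 1, 0) (dd (Pi.single x 1, 0) c) z)) :=
    fun x => by ring
  rw [Finset.sum_congr rfl fun x _ => fluxeq x]
  have KEY := key_algebra γ ν (p z) (c z) (μ z) (dd (0, 1) c z)
    (fun i => u i z) (fun i => dd (0, 1) (u i) z)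
    (fun i => dd (Pi.single i 1, 0) p z) (fun i => dd (Pi.single i 1, 0) c z)
    (fun i => dd (Pi.single i 1, 0) (dd (0, 1) c) z)
    (fun i => dd (Pi.single i 1, 0) (dd (Pi.single i 1, 0) c) z)
    (fun i => dd (Pi.single i 1, 0) μ z)
    (fun i => dd (Pi.single i 1, 0) (dd (Pi.single i 1, 0) μ) z)
    (fun i => ∑ j, dd (Pi.single j 1, 0) (dd (Pi.single j 1, 0) (u i)) z)
    (fun j i => dd (Pi.single j 1, 0) (u i) z)
    hdiv' hmom' hch'' hMz
  beta_reduce at KEY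
  linear_combination KEY
end

section
/- Let α, δ, ν, γ > 0, let a < b be real numbers and T > 0. Suppose p, u, c, v : ℝ × ℝ → ℝ are smooth functions that satisfy, for all (x,t) ∈ [a,b] × (0,T), the one-dimensional friction-type system: ∂_t p + (1/α) ∂_x u = 0; ∂_t u + (3/2) u ∂_x u + ∂_x p = −c ∂_x μ + ν ∂_xx u, where μ := W′(c) − γ ∂_xx c; ∂_t c + ∂_x(c u) + ∂_x v = 0; ∂_t v + (1/δ) ∂_x μ = −(1/δ) v. Assume the boundary conditions u(a,t) = u(b,t) = 0, ∂_x c(a,t) = ∂_x c(b,t) = 0 and v(a,t) = v(b,t) = 0 for all t ∈ (0,T). Then for every t ∈ (0,T), the function t ↦ ∫_a^b [ (α/2) p² + (1/2) u² + (δ/2) v² + W(c) + (γ/2) (∂_x c)² ] dx has derivative equal to −∫_a^b ( v² + ν (∂_x u)² ) dx; in particular this derivative is ≤ 0. -/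
/-- Spatial partial derivative of a function of `(x, t) ∈ ℝ × ℝ`. -/
noncomputable def dX (f : ℝ × ℝ → ℝ) (z : ℝ × ℝ) : ℝ := fderiv ℝ f z (1, 0)

/-- Time partial derivative of a function of `(x, t) ∈ ℝ × ℝ`. -/
noncomputable def dT (f : ℝ × ℝ → ℝ) (z : ℝ × ℝ) : ℝ := fderiv ℝ f z (0, 1)

lemma dX_smooth {f : ℝ × ℝ → ℝ} (hf : ContDiff ℝ (⊤ : ℕ∞) f) : ContDiff ℝ (⊤ : ℕ∞) (dX f) :=
  (hf.fderiv_right (by simp)).clm_apply contDiff_const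

lemma dT_smooth {f : ℝ × ℝ → ℝ} (hf : ContDiff ℝ (⊤ : ℕ∞) f) : ContDiff ℝ (⊤ : ℕ∞) (dT f) :=
  (hf.fderiv_right (by simp)).clm_apply contDiff_const

lemma hasDerivAt_dX {f : ℝ × ℝ → ℝ} (hf : ContDiff ℝ (⊤ : ℕ∞) f) (x t : ℝ) :
    HasDerivAt (fun y => f (y, t)) (dX f (x, t)) x := by
  have h := (hf.differentiable (by simp) (x, t)).hasFDerivAt
  have hg : HasDerivAt (fun y : ℝ => (y, t)) ((1 : ℝ), (0 : ℝ)) x := by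
    simpa using (hasDerivAt_id x).prodMk (hasDerivAt_const x t)
  exact h.comp_hasDerivAt x hg

lemma hasDerivAt_dT {f : ℝ × ℝ → ℝ} (hf : ContDiff ℝ (⊤ : ℕ∞) f) (x t : ℝ) :
    HasDerivAt (fun s => f (x, s)) (dT f (x, t)) t := by
  have h := (hf.differentiable (by simp) (x, t)).hasFDerivAt
  have hg : HasDerivAt (fun s : ℝ => (x, s)) ((0 : ℝ), (1 : ℝ)) t := by
    simpa using (hasDerivAt_const t x).prodMk (hasDerivAt_id t)
  exact h.comp_hasDerivAt t hg

lemma dXdT_symm {f : ℝ × ℝ → ℝ} (hf : ContDiff ℝ (⊤ : ℕ∞) f) (z : ℝ × ℝ) :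
    dX (dT f) z = dT (dX f) z := by
  have hdf : Differentiable ℝ f := hf.differentiable (by simp)
  have hdf' : DifferentiableAt ℝ (fderiv ℝ f) z :=
    ((hf.fderiv_right (m := ((⊤ : ℕ∞) : WithTop ℕ∞)) (by simp)).differentiable (by simp)) z
  have hsymm := second_derivative_symmetric (𝕜 := ℝ) (f := f) (f' := fderiv ℝ f)
    (fun y => (hdf y).hasFDerivAt) hdf'.hasFDerivAt
  have hX : ∀ w : ℝ × ℝ, fderiv ℝ (fun y => fderiv ℝ f y w) z
      = (fderiv ℝ (fderiv ℝ f) z).flip w := by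
    intro w
    have : HasFDerivAt (fun y => fderiv ℝ f y w)
        ((fderiv ℝ (fderiv ℝ f) z).flip w) z := by
      simpa using hdf'.hasFDerivAt.clm_apply (hasFDerivAt_const w z)
    exact this.fderiv
  show fderiv ℝ (fun y => fderiv ℝ f y (0, 1)) z (1, 0)
      = fderiv ℝ (fun y => fderiv ℝ f y (1, 0)) z (0, 1)
  rw [hX (0, 1), hX (1, 0)]
  simp only [ContinuousLinearMap.flip_apply]
  exact hsymm _ _

lemma param_hasDerivAt {e : ℝ × ℝ → ℝ} (he : ContDiff ℝ (⊤ : ℕ∞) e) (a b t : ℝ) :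
    HasDerivAt (fun s => ∫ x in a..b, e (x, s)) (∫ x in a..b, dT e (x, t)) t := by
  have hK : IsCompact (Set.uIcc a b ×ˢ Set.Icc (t - 1) (t + 1)) :=
    isCompact_uIcc.prod isCompact_Icc
  obtain ⟨C, hC⟩ := hK.exists_bound_of_continuousOn (dT_smooth he).continuous.continuousOn
  have hmeas : ∀ s : ℝ, MeasureTheory.AEStronglyMeasurable (fun x => e (x, s))
      (MeasureTheory.volume.restrict (Set.uIoc a b)) := fun s =>
    (he.continuous.comp (continuous_id.prodMk continuous_const)).aestronglyMeasurable
  have hmeas' : MeasureTheory.AEStronglyMeasurable (fun x => dT e (x, t))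
      (MeasureTheory.volume.restrict (Set.uIoc a b)) :=
    ((dT_smooth he).continuous.comp (continuous_id.prodMk continuous_const)).aestronglyMeasurable
  refine (intervalIntegral.hasDerivAt_integral_of_dominated_loc_of_deriv_le
    (F := fun s x => e (x, s)) (F' := fun s x => dT e (x, s)) (bound := fun _ => C)
    (Metric.ball_mem_nhds t one_pos) (Filter.Eventually.of_forall fun s => hmeas s)
    ((he.continuous.comp (continuous_id.prodMk continuous_const)).intervalIntegrable a b)
    hmeas' ?_ (intervalIntegrable_const) ?_).2
  · refine MeasureTheory.ae_of_all _ fun x hx s hs => hC (x, s) ?_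
    refine Set.mk_mem_prod (Set.uIoc_subset_uIcc hx) ?_
    rw [Metric.mem_ball, Real.dist_eq] at hs
    constructor <;> [linarith [abs_lt.1 hs]; linarith [abs_lt.1 hs]]
  · exact MeasureTheory.ae_of_all _ fun x _ s _ => hasDerivAt_dT he x s

/-- Energy dissipation for the one-dimensional friction-type approximation of the
Navier–Stokes–Cahn–Hilliard system, with `W(c) = (1/4)(c² − 1)²` and
`μ = W′(c) − γ ∂ₓₓc`:  under homogeneous boundary conditions the energy
`∫ₐᵇ (α/2)p² + (1/2)u² + (δ/2)v² + W(c) + (γ/2)(∂ₓc)² dx` has time derivative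
`−∫ₐᵇ (v² + ν (∂ₓu)²) dx ≤ 0`. -/
theorem friction_type_energy_dissipation
    (α δ ν γ : ℝ) (hα : 0 < α) (hδ : 0 < δ) (hν : 0 < ν) (hγ : 0 < γ)
    (a b T : ℝ) (hab : a < b) (hT : 0 < T)
    (p u c v : ℝ × ℝ → ℝ)
    (hp : ContDiff ℝ (⊤ : ℕ∞) p) (hu : ContDiff ℝ (⊤ : ℕ∞) u) (hc : ContDiff ℝ (⊤ : ℕ∞) c)
    (hv : ContDiff ℝ (⊤ : ℕ∞) v)
    (μ : ℝ × ℝ → ℝ)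
    (hμ : μ = fun z => ((c z) ^ 3 - c z) - γ * dX (dX c) z)
    (heq1 : ∀ x ∈ Set.Icc a b, ∀ t ∈ Set.Ioo 0 T,
      dT p (x, t) + (1 / α) * dX u (x, t) = 0)
    (heq2 : ∀ x ∈ Set.Icc a b, ∀ t ∈ Set.Ioo 0 T,
      dT u (x, t) + (3 / 2) * u (x, t) * dX u (x, t) + dX p (x, t)
        = -(c (x, t) * dX μ (x, t)) + ν * dX (dX u) (x, t))
    (heq3 : ∀ x ∈ Set.Icc a b, ∀ t ∈ Set.Ioo 0 T,
      dT c (x, t) + dX (fun z => c z * u z) (x, t) + dX v (x, t) = 0)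
    (heq4 : ∀ x ∈ Set.Icc a b, ∀ t ∈ Set.Ioo 0 T,
      dT v (x, t) + (1 / δ) * dX μ (x, t) = -(1 / δ) * v (x, t))
    (hbu : ∀ t ∈ Set.Ioo 0 T, u (a, t) = 0 ∧ u (b, t) = 0)
    (hbc : ∀ t ∈ Set.Ioo 0 T, dX c (a, t) = 0 ∧ dX c (b, t) = 0)
    (hbv : ∀ t ∈ Set.Ioo 0 T, v (a, t) = 0 ∧ v (b, t) = 0) :
    ∀ t ∈ Set.Ioo 0 T,
      HasDerivAt (fun s => ∫ x in a..b,
          ((α / 2) * (p (x, s)) ^ 2 + (1 / 2) * (u (x, s)) ^ 2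
            + (δ / 2) * (v (x, s)) ^ 2 + (1 / 4) * ((c (x, s)) ^ 2 - 1) ^ 2
            + (γ / 2) * (dX c (x, s)) ^ 2))
        (-∫ x in a..b, ((v (x, t)) ^ 2 + ν * (dX u (x, t)) ^ 2)) t
      ∧ (-∫ x in a..b, ((v (x, t)) ^ 2 + ν * (dX u (x, t)) ^ 2)) ≤ 0 := by
  intro t ht
  have hcx := dX_smooth hc
  have hux := dX_smooth hu
  have hcxx := dX_smooth hcx
  have hct := dT_smooth hc
  have hμs : ContDiff ℝ (⊤ : ℕ∞) μ := by rw [hμ]; fun_prop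
  set E : ℝ × ℝ → ℝ := fun z =>
    (α / 2) * (p z) ^ 2 + (1 / 2) * (u z) ^ 2 + (δ / 2) * (v z) ^ 2
      + (1 / 4) * ((c z) ^ 2 - 1) ^ 2 + (γ / 2) * (dX c z) ^ 2 with hEdef
  set G : ℝ × ℝ → ℝ := fun z =>
    -(p z * u z) - (1 / 2) * (u z) ^ 3 + ν * (u z * dX u z) - μ z * (c z * u z)
      - μ z * v z + γ * (dX c z * dT c z) with hGdef
  have hE : ContDiff ℝ (⊤ : ℕ∞) E := by rw [hEdef]; fun_prop
  have hG : ContDiff ℝ (⊤ : ℕ∞) G := by rw [hGdef]; fun_prop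
  -- pointwise key identity
  have key : ∀ x ∈ Set.Icc a b,
      dT E (x, t) = -((v (x, t)) ^ 2 + ν * (dX u (x, t)) ^ 2) + dX G (x, t) := by
    intro x hx
    have Hp := hasDerivAt_dT hp x t
    have Hu := hasDerivAt_dT hu x t
    have Hc := hasDerivAt_dT hc x t
    have Hv := hasDerivAt_dT hv x t
    have Hcx := hasDerivAt_dT hcx x t
    have hEt' : HasDerivAt (fun s => E (x, s))
        (α * p (x, t) * dT p (x, t) + u (x, t) * dT u (x, t)
          + δ * v (x, t) * dT v (x, t)
          + ((c (x, t)) ^ 2 - 1) * (c (x, t) * dT c (x, t))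
          + γ * (dX c (x, t) * dT (dX c) (x, t))) t := by
      have h := (((((Hp.pow 2).const_mul (α / 2)).add
        ((Hu.pow 2).const_mul (1 / 2))).add
        ((Hv.pow 2).const_mul (δ / 2))).add
        ((((Hc.pow 2).sub_const 1).pow 2).const_mul (1 / 4))).add
        ((Hcx.pow 2).const_mul (γ / 2))
      refine h.congr_deriv ?_
      simp only [Pi.pow_apply, Pi.mul_apply]
      push_cast
      ring
    have hkey : dT E (x, t) = _ := (hasDerivAt_dT hE x t).unique hEt'
    have Xp := hasDerivAt_dX hp x t
    have Xu := hasDerivAt_dX hu x t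
    have Xc := hasDerivAt_dX hc x t
    have Xv := hasDerivAt_dX hv x t
    have Xμ := hasDerivAt_dX hμs x t
    have Xuu := hasDerivAt_dX hux x t
    have Xcc := hasDerivAt_dX hcx x t
    have Xct := hasDerivAt_dX hct x t
    have hGx' : HasDerivAt (fun y => G (y, t))
        (-(dX p (x, t) * u (x, t) + p (x, t) * dX u (x, t))
          - (3 / 2) * (u (x, t)) ^ 2 * dX u (x, t)
          + ν * (dX u (x, t) * dX u (x, t) + u (x, t) * dX (dX u) (x, t))
          - (dX μ (x, t) * (c (x, t) * u (x, t))
              + μ (x, t) * (dX c (x, t) * u (x, t) + c (x, t) * dX u (x, t)))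
          - (dX μ (x, t) * v (x, t) + μ (x, t) * dX v (x, t))
          + γ * (dX (dX c) (x, t) * dT c (x, t)
              + dX c (x, t) * dT (dX c) (x, t))) x := by
      have h := ((((((Xp.mul Xu).neg).sub ((Xu.pow 3).const_mul (1 / 2))).add
        ((Xu.mul Xuu).const_mul ν)).sub (Xμ.mul (Xc.mul Xu))).sub
        (Xμ.mul Xv)).add ((Xcc.mul Xct).const_mul γ)
      refine h.congr_deriv ?_
      simp only [Pi.mul_apply]
      rw [← dXdT_symm hc (x, t)]
      push_cast
      ring
    have hG2 : dX G (x, t) = _ := (hasDerivAt_dX hG x t).unique hGx'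
    have hcu : dX (fun z => c z * u z) (x, t)
        = dX c (x, t) * u (x, t) + c (x, t) * dX u (x, t) :=
      (hasDerivAt_dX (hc.mul hu) x t).unique (Xc.mul Xu)
    have e1 : dT p (x, t) = -(1 / α) * dX u (x, t) := by
      have := heq1 x hx t ht; linarith
    have e2 : dT u (x, t) = -((3 / 2) * u (x, t) * dX u (x, t)) - dX p (x, t)
        - c (x, t) * dX μ (x, t) + ν * dX (dX u) (x, t) := by
      have := heq2 x hx t ht; linarith
    have e3 : dT c (x, t) = -(dX c (x, t) * u (x, t) + c (x, t) * dX u (x, t))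
        - dX v (x, t) := by
      have h3 := heq3 x hx t ht; rw [hcu] at h3; linarith
    have e4 : dT v (x, t) = -(1 / δ) * dX μ (x, t) - (1 / δ) * v (x, t) := by
      have := heq4 x hx t ht; linarith
    have hμz : μ (x, t) = (c (x, t)) ^ 3 - c (x, t) - γ * dX (dX c) (x, t) := by
      rw [hμ]
    rw [hkey, hG2, e1, e2, e3, e4, hμz]
    field_simp
    ring
  -- continuity facts
  have hvc : Continuous v := hv.continuous
  have huxc : Continuous (dX u) := hux.continuous
  have hGc : Continuous (dX G) := (dX_smooth hG).continuous
  have hcont1 : Continuous (fun x => (v (x, t)) ^ 2 + ν * (dX u (x, t)) ^ 2) := by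
    fun_prop
  have hcont2 : Continuous (fun x => dX G (x, t)) := by fun_prop
  -- integral identity
  have hftc : ∫ x in a..b, dX G (x, t) = 0 := by
    rw [intervalIntegral.integral_eq_sub_of_hasDerivAt
      (f := fun y => G (y, t)) (fun x _ => hasDerivAt_dX hG x t)
      (hcont2.intervalIntegrable a b)]
    have ha : G (a, t) = 0 := by
      simp only [hGdef, (hbu t ht).1, (hbv t ht).1, (hbc t ht).1]
      ring
    have hb : G (b, t) = 0 := by
      simp only [hGdef, (hbu t ht).2, (hbv t ht).2, (hbc t ht).2]
      ring
    rw [ha, hb]; ring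
  have hint : ∫ x in a..b, dT E (x, t)
      = -∫ x in a..b, ((v (x, t)) ^ 2 + ν * (dX u (x, t)) ^ 2) := by
    rw [intervalIntegral.integral_congr
      (g := fun x => -((v (x, t)) ^ 2 + ν * (dX u (x, t)) ^ 2) + dX G (x, t))
      (fun x hx => key x (by rwa [Set.uIcc_of_le hab.le] at hx)),
      intervalIntegral.integral_add (f := fun x => -((v (x, t)) ^ 2 + ν * (dX u (x, t)) ^ 2))
          (hcont1.neg.intervalIntegrable a b)
        (hcont2.intervalIntegrable a b), hftc,
      intervalIntegral.integral_neg]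
    ring
  constructor
  · have h := param_hasDerivAt hE a b t
    rw [hint] at h
    exact h
  · rw [neg_nonpos]
    apply intervalIntegral.integral_nonneg hab.le
    intro x _
    positivity
end

section
/- Let α, δ, ν, γ > 0. Suppose p, u, c, v : ℝ × ℝ → ℝ are smooth functions that satisfy, at every point of an open set U ⊆ ℝ², the one-dimensional friction-type system: ∂_t p + (1/α) ∂_x u = 0; ∂_t u + (3/2) u ∂_x u + ∂_x p = −c ∂_x μ + ν ∂_xx u, where μ := W′(c) − γ ∂_xx c; ∂_t c + ∂_x(c u) + ∂_x v = 0; ∂_t v + (1/δ) ∂_x μ = −(1/δ) v. Then at every point of U: ∂_t( (α/2) p² + (1/2) u² + W(c) + (γ/2)(∂_x c)² + (δ/2) v² ) + ∂_x( p u + (1/2) u³ + c μ u + μ v − γ (∂_t c)(∂_x c) ) = −v² + ν (∂_xx u) u. -/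
section helpers
variable {f g : ℝ × ℝ → ℝ} {z y : ℝ × ℝ}

private lemma pd_add (hf : DifferentiableAt ℝ f z) (hg : DifferentiableAt ℝ g z) :
    fderiv ℝ (fun w => f w + g w) z y = fderiv ℝ f z y + fderiv ℝ g z y := by
  rw [fderiv_fun_add hf hg]; rfl

private lemma pd_sub (hf : DifferentiableAt ℝ f z) (hg : DifferentiableAt ℝ g z) :
    fderiv ℝ (fun w => f w - g w) z y = fderiv ℝ f z y - fderiv ℝ g z y := by
  rw [fderiv_fun_sub hf hg]; rfl

private lemma pd_mul (hf : DifferentiableAt ℝ f z) (hg : DifferentiableAt ℝ g z) :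
    fderiv ℝ (fun w => f w * g w) z y = fderiv ℝ f z y * g z + f z * fderiv ℝ g z y := by
  rw [fderiv_fun_mul hf hg]; simp [mul_comm]; ring

private lemma pd_const_mul (k : ℝ) (hf : DifferentiableAt ℝ f z) :
    fderiv ℝ (fun w => k * f w) z y = k * fderiv ℝ f z y := by
  rw [fderiv_const_mul hf]; simp

private lemma pd_sq (hf : DifferentiableAt ℝ f z) :
    fderiv ℝ (fun w => f w ^ 2) z y = 2 * f z * fderiv ℝ f z y := by
  have h : (fun w => f w ^ 2) = fun w => f w * f w := by ext w; ring
  rw [h, pd_mul hf hf]; ring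

private lemma pd_cube (hf : DifferentiableAt ℝ f z) :
    fderiv ℝ (fun w => f w ^ 3) z y = 3 * f z ^ 2 * fderiv ℝ f z y := by
  have h : (fun w => f w ^ 3) = fun w => f w * f w ^ 2 := by ext w; ring
  rw [h, pd_mul hf (hf.fun_pow 2), pd_sq hf]; ring

private lemma pd_contDiff (hf : ContDiff ℝ (⊤ : ℕ∞) f) (y : ℝ × ℝ) :
    ContDiff ℝ (⊤ : ℕ∞) (fun z => fderiv ℝ f z y) := by
  have h1 : ContDiff ℝ (⊤ : ℕ∞) (fun z => fderiv ℝ f z) := hf.fderiv_right (by simp)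
  exact (ContinuousLinearMap.apply ℝ ℝ y).contDiff.comp h1

private lemma pd_pd (hf : ContDiff ℝ (⊤ : ℕ∞) f) (y y' : ℝ × ℝ) :
    fderiv ℝ (fun z => fderiv ℝ f z y) z y' = fderiv ℝ (fderiv ℝ f) z y' y := by
  have h1 : DifferentiableAt ℝ (fun z => fderiv ℝ f z) z :=
    ((hf.fderiv_right (m := 1) (WithTop.coe_le_coe.mpr le_top)).differentiable one_ne_zero) z
  rw [fderiv_clm_apply h1 (differentiableAt_const y)]
  simp

private lemma pd_swap (hf : ContDiff ℝ (⊤ : ℕ∞) f) (y y' : ℝ × ℝ) :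
    fderiv ℝ (fun z => fderiv ℝ f z y) z y' = fderiv ℝ (fun z => fderiv ℝ f z y') z y := by
  have hs : IsSymmSndFDerivAt ℝ f z :=
    hf.contDiffAt.isSymmSndFDerivAt
      (by rw [minSmoothness_of_isRCLikeNormedField]; exact WithTop.coe_le_coe.mpr le_top)
  rw [pd_pd hf, pd_pd hf, hs y' y]

end helpers

/-- Pointwise (divergence-form) energy identity for the one-dimensional
friction-type approximation of the Navier–Stokes–Cahn–Hilliard system, with
`W(c) = (1/4)(c² − 1)²` and `μ = W′(c) − γ ∂ₓₓc`. -/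
theorem friction_type_pointwise_energy_identity
    (α δ ν γ : ℝ) (hα : 0 < α) (hδ : 0 < δ) (hν : 0 < ν) (hγ : 0 < γ)
    (p u c v : ℝ × ℝ → ℝ)
    (hp : ContDiff ℝ (⊤ : ℕ∞) p) (hu : ContDiff ℝ (⊤ : ℕ∞) u) (hc : ContDiff ℝ (⊤ : ℕ∞) c)
    (hv : ContDiff ℝ (⊤ : ℕ∞) v)
    (U : Set (ℝ × ℝ)) (hU : IsOpen U)
    (μ : ℝ × ℝ → ℝ)
    (hμ : μ = fun z => ((c z) ^ 3 - c z) - γ * dX (dX c) z)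
    (heq1 : ∀ z ∈ U, dT p z + (1 / α) * dX u z = 0)
    (heq2 : ∀ z ∈ U,
      dT u z + (3 / 2) * u z * dX u z + dX p z
        = -(c z * dX μ z) + ν * dX (dX u) z)
    (heq3 : ∀ z ∈ U, dT c z + dX (fun w => c w * u w) z + dX v z = 0)
    (heq4 : ∀ z ∈ U, dT v z + (1 / δ) * dX μ z = -(1 / δ) * v z) :
    ∀ z ∈ U,
      dT (fun w => (α / 2) * (p w) ^ 2 + (1 / 2) * (u w) ^ 2
          + (1 / 4) * ((c w) ^ 2 - 1) ^ 2 + (γ / 2) * (dX c w) ^ 2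
          + (δ / 2) * (v w) ^ 2) z
      + dX (fun w => p w * u w + (1 / 2) * (u w) ^ 3 + c w * μ w * u w
          + μ w * v w - γ * dT c w * dX c w) z
      = -(v z) ^ 2 + ν * dX (dX u) z * u z := by
  intro z hz
  -- smoothness of μ
  have hμs : ContDiff ℝ (⊤ : ℕ∞) μ := by
    rw [hμ]
    exact ((hc.pow 3).sub hc).sub
      (contDiff_const.mul (pd_contDiff (pd_contDiff hc (1,0)) (1,0)))
  -- pointwise differentiability
  have Dp : DifferentiableAt ℝ p z := (hp.differentiable (by simp)) z
  have Du : DifferentiableAt ℝ u z := (hu.differentiable (by simp)) z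
  have Dc : DifferentiableAt ℝ c z := (hc.differentiable (by simp)) z
  have Dv : DifferentiableAt ℝ v z := (hv.differentiable (by simp)) z
  have Dμ : DifferentiableAt ℝ μ z := (hμs.differentiable (by simp)) z
  have Dcx : DifferentiableAt ℝ (fun w => fderiv ℝ c w ((1:ℝ),(0:ℝ))) z :=
    ((pd_contDiff hc (1,0)).differentiable (by simp)) z
  have Dct : DifferentiableAt ℝ (fun w => fderiv ℝ c w ((0:ℝ),(1:ℝ))) z :=
    ((pd_contDiff hc (0,1)).differentiable (by simp)) z
  -- specialize the equations
  have h1 := heq1 z hz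
  have h2 := heq2 z hz
  have h3 := heq3 z hz
  have h4 := heq4 z hz
  have hμz : μ z = c z ^ 3 - c z - γ * dX (dX c) z := by rw [hμ]
  simp only [dX, dT] at h1 h2 h3 h4 hμz ⊢
  simp only [show dX c = fun w => fderiv ℝ c w (1,0) from rfl,
    show dX u = fun w => fderiv ℝ u w (1,0) from rfl] at h2 hμz ⊢
  rw [pd_mul Dc Du] at h3
  have h1' : α * fderiv ℝ p z (0,1) + fderiv ℝ u z (1,0) = 0 := by
    have hα' : α ≠ 0 := ne_of_gt hα
    field_simp at h1; linarith
  have h4' : δ * fderiv ℝ v z (0,1) + fderiv ℝ μ z (1,0) = -v z := by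
    have hδ' : δ ≠ 0 := ne_of_gt hδ
    field_simp at h4; linarith
  -- differentiability of the energy summands
  have dE1 : DifferentiableAt ℝ (fun w => (α/2) * p w ^ 2) z := (Dp.pow 2).const_mul _
  have dE2 : DifferentiableAt ℝ (fun w => (1/2) * u w ^ 2) z := (Du.pow 2).const_mul _
  have dE3 : DifferentiableAt ℝ (fun w => (1/4) * ((c w)^2 - 1)^2) z :=
    (((Dc.pow 2).sub_const 1).pow 2).const_mul _
  have dE4 : DifferentiableAt ℝ (fun w => (γ/2) * (fderiv ℝ c w (1,0)) ^ 2) z :=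
    (Dcx.pow 2).const_mul _
  have dE5 : DifferentiableAt ℝ (fun w => (δ/2) * v w ^ 2) z := (Dv.pow 2).const_mul _
  -- differentiability of the flux summands
  have dF1 : DifferentiableAt ℝ (fun w => p w * u w) z := Dp.mul Du
  have dF2 : DifferentiableAt ℝ (fun w => (1/2) * u w ^ 3) z := (Du.pow 3).const_mul _
  have dF3 : DifferentiableAt ℝ (fun w => c w * μ w * u w) z := (Dc.mul Dμ).mul Du
  have dF4 : DifferentiableAt ℝ (fun w => μ w * v w) z := Dμ.mul Dv
  have dF5 : DifferentiableAt ℝ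
      (fun w => γ * fderiv ℝ c w (0,1) * fderiv ℝ c w (1,0)) z :=
    (Dct.const_mul γ).mul Dcx
  -- expand the time derivative of the energy
  rw [pd_add (((dE1.fun_add dE2).fun_add dE3).fun_add dE4) dE5,
      pd_add ((dE1.fun_add dE2).fun_add dE3) dE4,
      pd_add (dE1.fun_add dE2) dE3, pd_add dE1 dE2,
      pd_const_mul _ (Dp.fun_pow 2), pd_sq Dp,
      pd_const_mul _ (Du.fun_pow 2), pd_sq Du,
      pd_const_mul _ (((Dc.fun_pow 2).sub_const 1).fun_pow 2),
      pd_sq ((Dc.fun_pow 2).sub_const 1), fderiv_sub_const, pd_sq Dc,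
      pd_const_mul _ (Dcx.fun_pow 2), pd_sq Dcx,
      pd_const_mul _ (Dv.fun_pow 2), pd_sq Dv,
  -- expand the space derivative of the flux
      pd_sub (((dF1.fun_add dF2).fun_add dF3).fun_add dF4) dF5,
      pd_add ((dF1.fun_add dF2).fun_add dF3) dF4,
      pd_add (dF1.fun_add dF2) dF3, pd_add dF1 dF2,
      pd_mul Dp Du,
      pd_const_mul _ (Du.fun_pow 3), pd_cube Du,
      pd_mul (Dc.fun_mul Dμ) Du, pd_mul Dc Dμ,
      pd_mul Dμ Dv,
      pd_mul (Dct.const_mul γ) Dcx, pd_const_mul _ Dct,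
  -- symmetry of second derivatives
      pd_swap hc (1,0) (0,1)]
  linear_combination (p z) * h1' + u z * h2
    + (c z ^ 3 - c z - γ * fderiv ℝ (fun w => fderiv ℝ c w (1,0)) z (1,0)) * h3
    + (v z) * h4'
    + (fderiv ℝ c z (1,0) * u z + c z * fderiv ℝ u z (1,0) + fderiv ℝ v z (1,0)) * hμz
end

section
/- Let α, β, δ, ν > 0. Suppose p, u, c, v, ω : ℝ × ℝ → ℝ are smooth functions that satisfy, at every point of an open set U ⊆ ℝ², the four evolution equations of the one-dimensional relaxed friction-type system: ∂_t p + (1/α) ∂_x u = 0; ∂_t u + (3/2) u ∂_x u + ∂_x p + c ∂_x( W′(c) + c/β ) = (1/β) c ∂_x ω + ν ∂_xx u; ∂_t c + ∂_x(c u) + ∂_x v = 0; ∂_t v + (1/δ) ∂_x( W′(c) + c/β ) = −(1/δ) v + (1/(δβ)) ∂_x ω. Then at every point of U, with ψ := W′(c) + (1/β)(c − ω): ∂_t( (α/2) p² + (1/2) u² + W(c) + (δ/2) v² ) + (1/β)(∂_t c)(c − ω) + ∂_x( p u + (1/2) u³ + c ψ u + ψ v ) = −v² + ν (∂_xx u)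 u. -/
section helpers
variable {f g : ℝ × ℝ → ℝ} {z w : ℝ × ℝ}

theorem dapp_add (hf : DifferentiableAt ℝ f z) (hg : DifferentiableAt ℝ g z) :
    fderiv ℝ (fun x => f x + g x) z w = fderiv ℝ f z w + fderiv ℝ g z w := by
  rw [fderiv_fun_add hf hg]; rfl

theorem dapp_sub (hf : DifferentiableAt ℝ f z) (hg : DifferentiableAt ℝ g z) :
    fderiv ℝ (fun x => f x - g x) z w = fderiv ℝ f z w - fderiv ℝ g z w := by
  rw [fderiv_fun_sub hf hg]; rfl

theorem dapp_mul (hf : DifferentiableAt ℝ f z) (hg : DifferentiableAt ℝ g z) :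
    fderiv ℝ (fun x => f x * g x) z w
      = f z * fderiv ℝ g z w + g z * fderiv ℝ f z w := by
  rw [fderiv_fun_mul hf hg]
  simp [ContinuousLinearMap.add_apply, ContinuousLinearMap.smul_apply]

theorem dapp_const_mul (a : ℝ) (hf : DifferentiableAt ℝ f z) :
    fderiv ℝ (fun x => a * f x) z w = a * fderiv ℝ f z w := by
  rw [fderiv_const_mul hf]; simp

theorem dapp_div_const (a : ℝ) (hf : DifferentiableAt ℝ f z) :
    fderiv ℝ (fun x => f x / a) z w = fderiv ℝ f z w / a := by
  simp only [div_eq_mul_inv]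
  rw [fderiv_mul_const hf]; simp [mul_comm]

theorem dapp_sq (hf : DifferentiableAt ℝ f z) :
    fderiv ℝ (fun x => f x ^ 2) z w = 2 * f z * fderiv ℝ f z w := by
  have h : (fun x => f x ^ 2) = fun x => f x * f x := by ext x; ring
  rw [h, dapp_mul hf hf]; ring

theorem dapp_cube (hf : DifferentiableAt ℝ f z) :
    fderiv ℝ (fun x => f x ^ 3) z w = 3 * f z ^ 2 * fderiv ℝ f z w := by
  have h : (fun x => f x ^ 3) = fun x => f x * (f x * f x) := by ext x; ring
  rw [h, dapp_mul hf (by fun_prop : DifferentiableAt ℝ (fun x => f x * f x) z), dapp_mul hf hf]; ring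

theorem dapp_sub_const (a : ℝ) (hf : DifferentiableAt ℝ f z) :
    fderiv ℝ (fun x => f x - a) z w = fderiv ℝ f z w := by
  rw [fderiv_sub_const]

end helpers

/-- Pointwise identity obtained by multiplying the evolution equations of the
one-dimensional relaxed friction-type system by the components
`αp, u, W′(c) + (1/β)(c − ω), δv` of the variational derivative of the relaxed
energy, with `W(c) = (1/4)(c² − 1)²` and `ψ = W′(c) + (1/β)(c − ω)`. -/
theorem relaxed_friction_type_pointwise_energy_identity
    (α β δ ν : ℝ) (hα : 0 < α) (hβ : 0 < β) (hδ : 0 < δ) (hν : 0 < ν)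
    (p u c v ω : ℝ × ℝ → ℝ)
    (hp : ContDiff ℝ (⊤ : ℕ∞) p) (hu : ContDiff ℝ (⊤ : ℕ∞) u) (hc : ContDiff ℝ (⊤ : ℕ∞) c)
    (hv : ContDiff ℝ (⊤ : ℕ∞) v) (hω : ContDiff ℝ (⊤ : ℕ∞) ω)
    (U : Set (ℝ × ℝ)) (hU : IsOpen U)
    (ψ : ℝ × ℝ → ℝ)
    (hψ : ψ = fun z => ((c z) ^ 3 - c z) + (1 / β) * (c z - ω z))
    (heq1 : ∀ z ∈ U, dT p z + (1 / α) * dX u z = 0)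
    (heq2 : ∀ z ∈ U,
      dT u z + (3 / 2) * u z * dX u z + dX p z
          + c z * dX (fun w => ((c w) ^ 3 - c w) + c w / β) z
        = (1 / β) * c z * dX ω z + ν * dX (dX u) z)
    (heq3 : ∀ z ∈ U, dT c z + dX (fun w => c w * u w) z + dX v z = 0)
    (heq4 : ∀ z ∈ U,
      dT v z + (1 / δ) * dX (fun w => ((c w) ^ 3 - c w) + c w / β) z
        = -(1 / δ) * v z + (1 / (δ * β)) * dX ω z) :
    ∀ z ∈ U,
      dT (fun w => (α / 2) * (p w) ^ 2 + (1 / 2) * (u w) ^ 2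
          + (1 / 4) * ((c w) ^ 2 - 1) ^ 2 + (δ / 2) * (v w) ^ 2) z
      + (1 / β) * dT c z * (c z - ω z)
      + dX (fun w => p w * u w + (1 / 2) * (u w) ^ 3 + c w * ψ w * u w
          + ψ w * v w) z
      = -(v z) ^ 2 + ν * dX (dX u) z * u z := by
  subst hψ
  intro z hz
  have h1 := heq1 z hz
  have h2 := heq2 z hz
  have h3 := heq3 z hz
  have h4 := heq4 z hz
  simp only [dT, dX] at *
  have hp' : Differentiable ℝ p := hp.differentiable (by simp)
  have hu' : Differentiable ℝ u := hu.differentiable (by simp)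
  have hc' : Differentiable ℝ c := hc.differentiable (by simp)
  have hv' : Differentiable ℝ v := hv.differentiable (by simp)
  have hω' : Differentiable ℝ ω := hω.differentiable (by simp)
  simp (disch := fun_prop) only
    [dapp_add, dapp_sub, dapp_mul, dapp_const_mul, dapp_div_const,
     dapp_sq, dapp_cube, dapp_sub_const, fderiv_const, fderiv_const_apply,
     Pi.zero_apply, ContinuousLinearMap.zero_apply, mul_zero, zero_mul,
     add_zero, zero_add, sub_zero, mul_one] at h1 h2 h3 h4 ⊢
  have hα0 : α ≠ 0 := hα.ne'
  have hβ0 : β ≠ 0 := hβ.ne'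
  have hδ0 : δ ≠ 0 := hδ.ne'
  linear_combination (norm := (field_simp; try ring1))
    (α * p z) * h1 + u z * h2
    + ((c z ^ 3 - c z) + (1 / β) * (c z - ω z)) * h3 + (δ * v z) * h4
end

section
/- Let α, ν > 0, let a < b be real numbers and T > 0. Suppose p, u : ℝ × ℝ → ℝ are smooth functions satisfying, for all (x,t) ∈ [a,b] × (0,T), the one-dimensional artificial-compressibility system: α ∂_t p + ∂_x u = 0 and ∂_t u + (3/2) u ∂_x u + ∂_x p = ν ∂_xx u, together with the boundary conditions u(a,t) = u(b,t) = 0 for all t ∈ (0,T). Then for every t ∈ (0,T), the function t ↦ ∫_a^b [ (1/2) u² + (α/2) p² ] dx has derivative equal to −ν ∫_a^b (∂_x u)² dx; in particular classical solutions dissipate the sum of the kinetic energy and the potential contribution α p²/2. -/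
lemma hasDerivAt_fst (f : ℝ × ℝ → ℝ) (hf : Differentiable ℝ f) (x t : ℝ) :
    HasDerivAt (fun x' => f (x', t)) (dX f (x, t)) x := by
  have hg : HasDerivAt (fun x' : ℝ => ((x', t) : ℝ × ℝ)) ((1 : ℝ), (0 : ℝ)) x :=
    (hasDerivAt_id x).prodMk (hasDerivAt_const x t)
  exact (hf (x, t)).hasFDerivAt.comp_hasDerivAt x hg

lemma hasDerivAt_snd (f : ℝ × ℝ → ℝ) (hf : Differentiable ℝ f) (x t : ℝ) :
    HasDerivAt (fun s => f (x, s)) (dT f (x, t)) t := by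
  have hg : HasDerivAt (fun s : ℝ => ((x, s) : ℝ × ℝ)) ((0 : ℝ), (1 : ℝ)) t :=
    (hasDerivAt_const t x).prodMk (hasDerivAt_id t)
  exact (hf (x, t)).hasFDerivAt.comp_hasDerivAt t hg

lemma contDiff_dX (f : ℝ × ℝ → ℝ) (hf : ContDiff ℝ (⊤ : ℕ∞) f) : ContDiff ℝ (⊤ : ℕ∞) (dX f) :=
  (hf.fderiv_right (by simp)).clm_apply contDiff_const

lemma contDiff_dT (f : ℝ × ℝ → ℝ) (hf : ContDiff ℝ (⊤ : ℕ∞) f) : ContDiff ℝ (⊤ : ℕ∞) (dT f) :=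
  (hf.fderiv_right (by simp)).clm_apply contDiff_const

lemma hasDerivAt_param (f : ℝ × ℝ → ℝ) (hf : ContDiff ℝ (⊤ : ℕ∞) f) (a b t : ℝ) :
    HasDerivAt (fun s => ∫ x in a..b, f (x, s)) (∫ x in a..b, dT f (x, t)) t := by
  have hft : Continuous (dT f) := (contDiff_dT f hf).continuous
  obtain ⟨C, hC⟩ :=
    ((isCompact_uIcc (a := a) (b := b)).prod (isCompact_Icc (a := t - 1)
      (b := t + 1))).exists_bound_of_continuousOn hft.continuousOn
  have hcont : ∀ s : ℝ, Continuous fun x => f (x, s) := fun s =>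
    hf.continuous.comp (continuous_id.prodMk continuous_const)
  have hcont' : ∀ s : ℝ, Continuous fun x => dT f (x, s) := fun s =>
    hft.comp (continuous_id.prodMk continuous_const)
  have := intervalIntegral.hasDerivAt_integral_of_dominated_loc_of_deriv_le
    (μ := MeasureTheory.volume) (F := fun s x => f (x, s)) (F' := fun s x => dT f (x, s))
    (x₀ := t) (bound := fun _ => C) (s := Metric.ball t 1) (Metric.ball_mem_nhds t one_pos)
    (Filter.Eventually.of_forall fun s => (hcont s).aestronglyMeasurable)
    ((hcont t).intervalIntegrable a b)
    ((hcont' t).aestronglyMeasurable)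
    ?_ (intervalIntegrable_const) ?_
  · exact this.2
  · refine Filter.Eventually.of_forall fun x hx s hs => ?_
    have hxK : x ∈ Set.uIcc a b := Set.uIoc_subset_uIcc hx
    have hsK : s ∈ Set.Icc (t - 1) (t + 1) := by
      rw [Metric.mem_ball, Real.dist_eq] at hs
      constructor <;> [linarith [abs_lt.mp hs]; linarith [abs_lt.mp hs]]
    exact hC (x, s) ⟨hxK, hsK⟩
  · exact Filter.Eventually.of_forall fun x _ s _ =>
      hasDerivAt_snd f (hf.differentiable (by simp)) x s
/-- Energy dissipation for Chorin's artificial-compressibility approximation of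
the incompressible Navier–Stokes equations in one space dimension: for the
system `α ∂ₜp + ∂ₓu = 0`, `∂ₜu + (3/2) u ∂ₓu + ∂ₓp = ν ∂ₓₓu` with homogeneous
Dirichlet boundary conditions for `u`, the energy `∫ₐᵇ (1/2)u² + (α/2)p² dx`
has time derivative `−ν ∫ₐᵇ (∂ₓu)² dx ≤ 0`. -/
theorem artificial_compressibility_energy_dissipation
    (α ν : ℝ) (hα : 0 < α) (hν : 0 < ν)
    (a b T : ℝ) (hab : a < b) (hT : 0 < T)
    (p u : ℝ × ℝ → ℝ)
    (hp : ContDiff ℝ (⊤ : ℕ∞) p) (hu : ContDiff ℝ (⊤ : ℕ∞) u)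
    (heq1 : ∀ x ∈ Set.Icc a b, ∀ t ∈ Set.Ioo 0 T,
      α * dT p (x, t) + dX u (x, t) = 0)
    (heq2 : ∀ x ∈ Set.Icc a b, ∀ t ∈ Set.Ioo 0 T,
      dT u (x, t) + (3 / 2) * u (x, t) * dX u (x, t) + dX p (x, t)
        = ν * dX (dX u) (x, t))
    (hbu : ∀ t ∈ Set.Ioo 0 T, u (a, t) = 0 ∧ u (b, t) = 0) :
    ∀ t ∈ Set.Ioo 0 T,
      HasDerivAt (fun s => ∫ x in a..b,
          ((1 / 2) * (u (x, s)) ^ 2 + (α / 2) * (p (x, s)) ^ 2))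
        (-(ν * ∫ x in a..b, (dX u (x, t)) ^ 2)) t
      ∧ (-(ν * ∫ x in a..b, (dX u (x, t)) ^ 2)) ≤ 0 := by
  intro t ht
  have hud : Differentiable ℝ u := hu.differentiable (by simp)
  have hpd : Differentiable ℝ p := hp.differentiable (by simp)
  have hdxu : ContDiff ℝ (⊤ : ℕ∞) (dX u) := contDiff_dX u hu
  have hdxud : Differentiable ℝ (dX u) := hdxu.differentiable (by simp)
  -- energy density
  set e : ℝ × ℝ → ℝ := fun z => (1 / 2) * (u z) ^ 2 + (α / 2) * (p z) ^ 2 with he_def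
  have he : ContDiff ℝ (⊤ : ℕ∞) e := (contDiff_const.mul (hu.pow 2)).add (contDiff_const.mul (hp.pow 2))
  -- pointwise time derivative of the density
  have hdTe : ∀ x s : ℝ, dT e (x, s) = u (x, s) * dT u (x, s) + α * p (x, s) * dT p (x, s) := by
    intro x s
    have h1 : HasDerivAt (fun s' => e (x, s')) (dT e (x, s)) s :=
      hasDerivAt_snd e (he.differentiable (by simp)) x s
    have hus := hasDerivAt_snd u hud x s
    have hps := hasDerivAt_snd p hpd x s
    have h2 : HasDerivAt (fun s' => e (x, s'))
        (u (x, s) * dT u (x, s) + α * p (x, s) * dT p (x, s)) s := by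
      have := ((hus.pow 2).const_mul ((1:ℝ)/2)).add ((hps.pow 2).const_mul (α/2))
      refine this.congr_deriv ?_
      push_cast
      ring
    exact h1.unique h2
  -- integration by parts via FTC
  set G : ℝ → ℝ := fun x => ν * (dX u (x, t)) ^ 2 + ν * u (x, t) * dX (dX u) (x, t)
      - (3 / 2) * (u (x, t)) ^ 2 * dX u (x, t) - dX u (x, t) * p (x, t)
      - u (x, t) * dX p (x, t) with hG_def
  set F : ℝ → ℝ := fun x => ν * u (x, t) * dX u (x, t) - (1 / 2) * (u (x, t)) ^ 3
      - u (x, t) * p (x, t) with hF_def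
  have hFderiv : ∀ x : ℝ, HasDerivAt F (G x) x := by
    intro x
    have hux := hasDerivAt_fst u hud x t
    have hpx := hasDerivAt_fst p hpd x t
    have hdux := hasDerivAt_fst (dX u) hdxud x t
    have := (((hux.const_mul ν).mul hdux).sub ((hux.pow 3).const_mul ((1:ℝ)/2))).sub
      (hux.mul hpx)
    refine this.congr_deriv ?_
    push_cast
    ring
  have hcontx : ∀ f : ℝ × ℝ → ℝ, Continuous f → Continuous fun x : ℝ => f (x, t) := fun f hf =>
    hf.comp (continuous_id.prodMk continuous_const)
  have hcu := hcontx u hu.continuous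
  have hcp := hcontx p hp.continuous
  have hcdxu := hcontx (dX u) hdxu.continuous
  have hcdxxu := hcontx (dX (dX u)) (contDiff_dX _ hdxu).continuous
  have hcdxp := hcontx (dX p) (contDiff_dX p hp).continuous
  have hGcont : Continuous G := by
    simp only [hG_def]
    fun_prop
  have hFTC : ∫ x in a..b, G x = F b - F a :=
    intervalIntegral.integral_eq_sub_of_hasDerivAt (fun x _ => hFderiv x)
      (hGcont.intervalIntegrable a b)
  have hFa : F a = 0 := by simp [hF_def, (hbu t ht).1]
  have hFb : F b = 0 := by simp [hF_def, (hbu t ht).2]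
  have hGint : ∫ x in a..b, G x = 0 := by rw [hFTC, hFa, hFb]; ring
  -- pointwise identity on [a,b]
  have hkey : ∀ x ∈ Set.uIcc a b, dT e (x, t) = G x - ν * (dX u (x, t)) ^ 2 := by
    intro x hx
    rw [Set.uIcc_of_le hab.le] at hx
    have e1 := heq1 x hx t ht
    have e2 := heq2 x hx t ht
    have e3 := hdTe x t
    simp only [hG_def]
    linear_combination e3 + u (x, t) * e2 + p (x, t) * e1
  -- value of the derivative
  have hval : ∫ x in a..b, dT e (x, t) = -(ν * ∫ x in a..b, (dX u (x, t)) ^ 2) := by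
    rw [intervalIntegral.integral_congr hkey,
      intervalIntegral.integral_sub (g := fun x => ν * dX u (x, t) ^ 2) (hGcont.intervalIntegrable a b)
        ((continuous_const.mul (hcdxu.pow 2)).intervalIntegrable a b),
      hGint, intervalIntegral.integral_const_mul]
    ring
  constructor
  · have := hasDerivAt_param e he a b t
    rw [hval] at this
    exact this
  · have hI : 0 ≤ ∫ x in a..b, (dX u (x, t)) ^ 2 :=
      intervalIntegral.integral_nonneg hab.le fun x _ => sq_nonneg _
    exact neg_nonpos.mpr (mul_nonneg hν.le hI)
end

section
/- Let α, δ > 0 and 0 < β < 1. Define η : ℝ⁴ → ℝ by η(p, u, c, v) = (α/2) p² + (1/2) u² + W(c) + (1/(2β)) c² + (δ/2) v², where W(c) = (1/4)(c² − 1)². Then η is strictly convex on the convex set Q = { (p, u, c, v) ∈ ℝ⁴ : c ∈ [−1, 1] }. -/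
lemma sq_combo {a b : ℝ} (x y : ℝ) (ha : 0 ≤ a) (hb : 0 ≤ b) (hab : a + b = 1) :
    (a*x+b*y)^2 ≤ a*x^2+b*y^2 := by nlinarith [sq_nonneg (x-y), mul_nonneg ha hb]

lemma sq_combo_lt {a b x y : ℝ} (ha : 0 < a) (hb : 0 < b) (hab : a + b = 1) (hxy : x ≠ y) :
    (a*x+b*y)^2 < a*x^2+b*y^2 := by
  have h1 : 0 < (x-y)^2 := by
    have := sub_ne_zero.mpr hxy
    positivity
  nlinarith [mul_pos (mul_pos ha hb) h1]

lemma quart_combo {k a b : ℝ} (x y : ℝ) (hk : 1 < 2*k) (ha : 0 ≤ a) (hb : 0 ≤ b) (hab : a + b = 1) :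
    (1/4)*((a*x+b*y)^2-1)^2 + k*(a*x+b*y)^2 ≤ a*((1/4)*(x^2-1)^2 + k*x^2) + b*((1/4)*(y^2-1)^2 + k*y^2) := by
  have hb' : b = 1 - a := by linarith
  subst hb'
  have hA : 0 ≤ a*(1-a)*((x-y)*(3*(a*x+(1-a)*y)+((1-a)-a)*(x-y)))^2 :=
    mul_nonneg (mul_nonneg ha hb) (sq_nonneg _)
  have hB : 0 ≤ a*(1-a)*(a^2+a*(1-a)+(1-a)^2)*(x-y)^4 := by
    have h2 : (0:ℝ) ≤ a^2+a*(1-a)+(1-a)^2 := by nlinarith [sq_nonneg (2*a+(1-a)), sq_nonneg (1-a)]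
    nlinarith [mul_nonneg (mul_nonneg (mul_nonneg ha hb) h2) (sq_nonneg ((x-y)^2))]
  have hC : 0 ≤ a*(1-a)*(x-y)^2*(2*k-1) :=
    mul_nonneg (mul_nonneg (mul_nonneg ha hb) (sq_nonneg _)) (by linarith)
  nlinarith [hA, hB, hC]

lemma quart_combo_lt {k a b x y : ℝ} (hk : 1 < 2*k) (ha : 0 < a) (hb : 0 < b) (hab : a + b = 1) (hxy : x ≠ y) :
    (1/4)*((a*x+b*y)^2-1)^2 + k*(a*x+b*y)^2 < a*((1/4)*(x^2-1)^2 + k*x^2) + b*((1/4)*(y^2-1)^2 + k*y^2) := by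
  have hb' : b = 1 - a := by linarith
  subst hb'
  have h1 : 0 < (x-y)^2 := by
    have := sub_ne_zero.mpr hxy
    positivity
  have hA : 0 ≤ a*(1-a)*((x-y)*(3*(a*x+(1-a)*y)+((1-a)-a)*(x-y)))^2 :=
    mul_nonneg (mul_nonneg ha.le hb.le) (sq_nonneg _)
  have hB : 0 ≤ a*(1-a)*(a^2+a*(1-a)+(1-a)^2)*(x-y)^4 := by
    have h2 : (0:ℝ) ≤ a^2+a*(1-a)+(1-a)^2 := by nlinarith [sq_nonneg (2*a+(1-a)), sq_nonneg (1-a)]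
    nlinarith [mul_nonneg (mul_nonneg (mul_nonneg ha.le hb.le) h2) (sq_nonneg ((x-y)^2))]
  have hC : 0 < a*(1-a)*(x-y)^2*(2*k-1) :=
    mul_pos (mul_pos (mul_pos ha hb) h1) (by linarith)
  nlinarith [hA, hB, hC]



/-- Strict convexity of the mathematical entropy
`η(p,u,c,v) = (α/2)p² + (1/2)u² + W(c) + (1/(2β))c² + (δ/2)v²`,
`W(c) = (1/4)(c² − 1)²`, of the first-order relaxed friction-type system on the
state space `Q = {(p,u,c,v) ∈ ℝ⁴ : c ∈ [−1,1]}`, under the smallness condition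
`0 < β < 1`. -/
theorem entropy_strictly_convex
    (α β δ : ℝ) (hα : 0 < α) (hδ : 0 < δ) (hβ0 : 0 < β) (hβ1 : β < 1) :
    StrictConvexOn ℝ
      {Q : ℝ × ℝ × ℝ × ℝ | Q.2.2.1 ∈ Set.Icc (-1 : ℝ) 1}
      (fun Q : ℝ × ℝ × ℝ × ℝ =>
        (α / 2) * Q.1 ^ 2 + (1 / 2) * Q.2.1 ^ 2
          + (1 / 4) * (Q.2.2.1 ^ 2 - 1) ^ 2 + (1 / (2 * β)) * Q.2.2.1 ^ 2
          + (δ / 2) * Q.2.2.2 ^ 2) := by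
  have hk : 1 < 2 * (1 / (2 * β)) := by
    rw [mul_one_div, lt_div_iff₀ (by linarith : (0:ℝ) < 2*β)]
    linarith
  constructor
  · intro x hx y hy a b ha hb hab
    simp only [Set.mem_setOf_eq, Set.mem_Icc, Prod.smul_def, Prod.fst_add, Prod.snd_add,
      smul_eq_mul, Prod.mk_add_mk] at *
    constructor <;> nlinarith [hx.1, hx.2, hy.1, hy.2]
  · rintro ⟨p, u, c, v⟩ hx ⟨p', u', c', v'⟩ hy hxy a b ha hb hab
    simp only [Prod.smul_mk, Prod.mk_add_mk, smul_eq_mul]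
    have hne : p ≠ p' ∨ u ≠ u' ∨ c ≠ c' ∨ v ≠ v' := by
      by_contra h
      push_neg at h
      exact hxy (by simp [h.1, h.2.1, h.2.2.1, h.2.2.2])
    have hP : (a*p+b*p')^2 ≤ a*p^2+b*p'^2 := sq_combo p p' ha.le hb.le hab
    have hU : (a*u+b*u')^2 ≤ a*u^2+b*u'^2 := sq_combo u u' ha.le hb.le hab
    have hV : (a*v+b*v')^2 ≤ a*v^2+b*v'^2 := sq_combo v v' ha.le hb.le hab
    have hC : (1/4)*((a*c+b*c')^2-1)^2 + (1/(2*β))*(a*c+b*c')^2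
        ≤ a*((1/4)*(c^2-1)^2 + (1/(2*β))*c^2) + b*((1/4)*(c'^2-1)^2 + (1/(2*β))*c'^2) :=
      quart_combo c c' hk ha.le hb.le hab
    have hα2 : (0:ℝ) < α/2 := by linarith
    have hδ2 : (0:ℝ) < δ/2 := by linarith
    rcases hne with h | h | h | h
    · have := sq_combo_lt ha hb hab h
      linarith [mul_lt_mul_of_pos_left this hα2, mul_le_mul_of_nonneg_left hU (by norm_num : (0:ℝ) ≤ 1/2), mul_le_mul_of_nonneg_left hV hδ2.le]
    · have := sq_combo_lt ha hb hab h
      linarith [mul_le_mul_of_nonneg_left hP hα2.le, mul_lt_mul_of_pos_left this (by norm_num : (0:ℝ) < 1/2), mul_le_mul_of_nonneg_left hV hδ2.le]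
    · have := quart_combo_lt hk ha hb hab h
      linarith [mul_le_mul_of_nonneg_left hP hα2.le, mul_le_mul_of_nonneg_left hU (by norm_num : (0:ℝ) ≤ 1/2), mul_le_mul_of_nonneg_left hV hδ2.le]
    · have := sq_combo_lt ha hb hab h
      linarith [mul_le_mul_of_nonneg_left hP hα2.le, mul_le_mul_of_nonneg_left hU (by norm_num : (0:ℝ) ≤ 1/2), mul_lt_mul_of_pos_left this hδ2]
end

section
/- Let α, β, δ > 0. For a state Q = (p, u, c, v) ∈ ℝ⁴, let Df(Q) be the 4×4 real matrix with rows (0, 1/α, 0, 0), (1, (3/2)u, G′(c), 0), (0, c, u, 1), (0, 0, (1/δ)(W″(c) + 1/β), 0), where G′(c) = c·W″(c) + c/β, and define η(p,u,c,v) = (α/2)p² + (1/2)u² + W(c) + (1/(2β))c² + (δ/2)v² and q(p,u,c,v) = p u + (1/2) u³ + c (W′(c) + c/β) u + (W′(c) + c/β) v. Then for every Q ∈ ℝ⁴ the entropy compatibility relation holds: the row vector (∇η(Q))ᵀ Df(Q) equals (∇q(Q))ᵀ; explicitly, with ∇η(Q) = (α p, u, W′(c) + c/β, δ v), one has Σ_{i=1}^{4}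 (∇η(Q))_i (Df(Q))_{ij} = (∇q(Q))_j for each j = 1,…,4. -/
/-!
The gradient of `η` is `(α p, u, μ(c), δ v)` with `μ = W′ + c/β`, and multiplying it into `Df`
column by column reproduces `∇q`; the only column that is not immediate is the `c`-column, where
it comes down to `G′(c) = c μ′(c)`. Nothing about the quartic `W` is used beyond this, so the
relation is proved for an arbitrary potential `Ψ` with `Ψ′ = μ` (here `Ψ = W + c²/(2β)`).
-/

open ContinuousLinearMap

theorem fderiv_apply_single_of_hasFDerivAt {𝕜 ι : Type*} [NontriviallyNormedField 𝕜] [Fintype ι]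
    [DecidableEq ι] {f : (ι → 𝕜) → 𝕜} {g x : ι → 𝕜}
    (hf : HasFDerivAt f (∑ i, g i • (proj i : (ι → 𝕜) →L[𝕜] 𝕜)) x) (j : ι) :
    fderiv 𝕜 f x (Pi.single j 1) = g j := by
  simp [hf.fderiv, Pi.single_apply]

noncomputable section

variable (α δ : ℝ) (Ψ μ μ' : ℝ → ℝ)

def entropy (Q : Fin 4 → ℝ) : ℝ :=
  α / 2 * Q 0 ^ 2 + 1 / 2 * Q 1 ^ 2 + Ψ (Q 2) + δ / 2 * Q 3 ^ 2

def entropyFlux (Q : Fin 4 → ℝ) : ℝ :=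
  Q 0 * Q 1 + 1 / 2 * Q 1 ^ 3 + Q 2 * μ (Q 2) * Q 1 + μ (Q 2) * Q 3

def fluxJacobian (Q : Fin 4 → ℝ) : Matrix (Fin 4) (Fin 4) ℝ :=
  !![0, 1 / α, 0, 0;
     1, 3 / 2 * Q 1, Q 2 * μ' (Q 2), 0;
     0, Q 2, Q 1, 1;
     0, 0, 1 / δ * μ' (Q 2), 0]

variable {Ψ μ μ'}

theorem hasFDerivAt_entropy {Q : Fin 4 → ℝ} (hΨ : HasDerivAt Ψ (μ (Q 2)) (Q 2)) :
    HasFDerivAt (entropy α δ Ψ)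
      (∑ i, ![α * Q 0, Q 1, μ (Q 2), δ * Q 3] i • (proj i : (Fin 4 → ℝ) →L[ℝ] ℝ)) Q := by
  have hQ (k : Fin 4) := hasFDerivAt_apply (𝕜 := ℝ) k Q
  refine (((((hQ 0).pow 2).const_mul (α / 2)).add (((hQ 1).pow 2).const_mul (1 / 2))).add
    (hΨ.comp_hasFDerivAt Q (hQ 2))).add (((hQ 3).pow 2).const_mul (δ / 2)) |>.congr_fderiv ?_
  ext x
  simp [Fin.sum_univ_four]
  ring

theorem hasFDerivAt_entropyFlux {Q : Fin 4 → ℝ} (hμ : HasDerivAt μ (μ' (Q 2)) (Q 2)) :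
    HasFDerivAt (entropyFlux μ)
      (∑ i, ![Q 1, Q 0 + 3 / 2 * Q 1 ^ 2 + Q 2 * μ (Q 2),
        (μ (Q 2) + Q 2 * μ' (Q 2)) * Q 1 + μ' (Q 2) * Q 3, μ (Q 2)] i •
        (proj i : (Fin 4 → ℝ) →L[ℝ] ℝ)) Q := by
  have hQ (k : Fin 4) := hasFDerivAt_apply (𝕜 := ℝ) k Q
  have hμQ := hμ.comp_hasFDerivAt Q (hQ 2)
  refine ((((hQ 0).mul (hQ 1)).add (((hQ 1).pow 3).const_mul (1 / 2))).add
    (((hQ 2).mul hμQ).mul (hQ 1))).add (hμQ.mul (hQ 3)) |>.congr_fderiv ?_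
  ext x
  simp [Fin.sum_univ_four]
  ring

variable {α δ}

theorem vecMul_entropyGrad_fluxJacobian (hα : α ≠ 0) (hδ : δ ≠ 0) (Q : Fin 4 → ℝ) :
    Matrix.vecMul ![α * Q 0, Q 1, μ (Q 2), δ * Q 3] (fluxJacobian α δ μ' Q) =
      ![Q 1, Q 0 + 3 / 2 * Q 1 ^ 2 + Q 2 * μ (Q 2),
        (μ (Q 2) + Q 2 * μ' (Q 2)) * Q 1 + μ' (Q 2) * Q 3, μ (Q 2)] := by
  ext j
  fin_cases j <;> simp [fluxJacobian, Matrix.vecMul, dotProduct, Fin.sum_univ_four]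
  · field_simp
  · field_simp
    ring

theorem entropy_compatibility (hα : α ≠ 0) (hδ : δ ≠ 0) (hΨ : ∀ c, HasDerivAt Ψ (μ c) c)
    (hμ : ∀ c, HasDerivAt μ (μ' c) c) (Q : Fin 4 → ℝ) (j : Fin 4) :
    ∑ i, fderiv ℝ (entropy α δ Ψ) Q (Pi.single i 1) * fluxJacobian α δ μ' Q i j =
      fderiv ℝ (entropyFlux μ) Q (Pi.single j 1) := by
  simp only [fderiv_apply_single_of_hasFDerivAt (hasFDerivAt_entropy α δ (hΨ (Q 2))),
    fderiv_apply_single_of_hasFDerivAt (hasFDerivAt_entropyFlux (hμ (Q 2))),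
    ← vecMul_entropyGrad_fluxJacobian hα hδ Q, Matrix.vecMul, dotProduct]

end

theorem hasDerivAt_doubleWell_add_sq (β c : ℝ) :
    HasDerivAt (fun c => 1 / 4 * (c ^ 2 - 1) ^ 2 + 1 / (2 * β) * c ^ 2) (c ^ 3 - c + c / β) c := by
  refine ((((hasDerivAt_pow 2 c).sub_const 1).pow 2 |>.const_mul (1 / 4)).add
    ((hasDerivAt_pow 2 c).const_mul (1 / (2 * β)))).congr_deriv ?_
  field_simp
  ring

theorem hasDerivAt_doubleWell_deriv_add (β c : ℝ) :
    HasDerivAt (fun c => c ^ 3 - c + c / β) (3 * c ^ 2 - 1 + 1 / β) c := by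
  refine (((hasDerivAt_pow 3 c).sub (hasDerivAt_id c)).add
    ((hasDerivAt_id c).div_const β)).congr_deriv ?_
  norm_num

theorem entropy_flux_compatibility_general
    (α β δ : ℝ) (hα : 0 < α) (hδ : 0 < δ)
    (η q : (Fin 4 → ℝ) → ℝ)
    (hη : η = fun Q => (α / 2) * (Q 0) ^ 2 + (1 / 2) * (Q 1) ^ 2
        + (1 / 4) * ((Q 2) ^ 2 - 1) ^ 2 + (1 / (2 * β)) * (Q 2) ^ 2
        + (δ / 2) * (Q 3) ^ 2)
    (hq : q = fun Q => Q 0 * Q 1 + (1 / 2) * (Q 1) ^ 3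
        + Q 2 * (((Q 2) ^ 3 - Q 2) + Q 2 / β) * Q 1
        + (((Q 2) ^ 3 - Q 2) + Q 2 / β) * Q 3)
    (Df : (Fin 4 → ℝ) → Matrix (Fin 4) (Fin 4) ℝ)
    (hDf : ∀ Q, Df Q =
      !![0, 1 / α, 0, 0;
         1, (3 / 2) * Q 1, Q 2 * (3 * (Q 2) ^ 2 - 1) + Q 2 / β, 0;
         0, Q 2, Q 1, 1;
         0, 0, (1 / δ) * ((3 * (Q 2) ^ 2 - 1) + 1 / β), 0]) :
    ∀ Q : Fin 4 → ℝ, ∀ j : Fin 4,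
      ∑ i : Fin 4, fderiv ℝ η Q (Pi.single i 1) * Df Q i j
        = fderiv ℝ q Q (Pi.single j 1) := by
  intro Q j
  have hη' : η = entropy α δ fun c => 1 / 4 * (c ^ 2 - 1) ^ 2 + 1 / (2 * β) * c ^ 2 := by
    rw [hη]; funext Q; simp only [entropy]; ring
  have hq' : q = entropyFlux fun c => c ^ 3 - c + c / β := by
    rw [hq]; rfl
  have hDf' : Df Q = fluxJacobian α δ (fun c => 3 * c ^ 2 - 1 + 1 / β) Q := by
    simp only [hDf, fluxJacobian, mul_add, mul_one_div]
  rw [hη', hq', hDf']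
  exact entropy_compatibility hα.ne' hδ.ne' (hasDerivAt_doubleWell_add_sq β)
    (hasDerivAt_doubleWell_deriv_add β) Q j

/-- Entropy compatibility relation `(∇η)ᵀ Df = (∇q)ᵀ` for the one-dimensional
hyperbolic sub-system of the relaxed friction-type approximation, with
`W(c) = (1/4)(c² − 1)²`, `W′(c) = c³ − c`, `W″(c) = 3c² − 1`,
entropy `η(p,u,c,v) = (α/2)p² + (1/2)u² + W(c) + (1/(2β))c² + (δ/2)v²` and
entropy flux `q(p,u,c,v) = pu + (1/2)u³ + c(W′(c) + c/β)u + (W′(c) + c/β)v`. -/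
theorem entropy_flux_compatibility
    (α β δ : ℝ) (hα : 0 < α) (hβ : 0 < β) (hδ : 0 < δ)
    (η q : (Fin 4 → ℝ) → ℝ)
    (hη : η = fun Q => (α / 2) * (Q 0) ^ 2 + (1 / 2) * (Q 1) ^ 2
        + (1 / 4) * ((Q 2) ^ 2 - 1) ^ 2 + (1 / (2 * β)) * (Q 2) ^ 2
        + (δ / 2) * (Q 3) ^ 2)
    (hq : q = fun Q => Q 0 * Q 1 + (1 / 2) * (Q 1) ^ 3
        + Q 2 * (((Q 2) ^ 3 - Q 2) + Q 2 / β) * Q 1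
        + (((Q 2) ^ 3 - Q 2) + Q 2 / β) * Q 3)
    (Df : (Fin 4 → ℝ) → Matrix (Fin 4) (Fin 4) ℝ)
    (hDf : ∀ Q, Df Q =
      !![0, 1 / α, 0, 0;
         1, (3 / 2) * Q 1, Q 2 * (3 * (Q 2) ^ 2 - 1) + Q 2 / β, 0;
         0, Q 2, Q 1, 1;
         0, 0, (1 / δ) * ((3 * (Q 2) ^ 2 - 1) + 1 / β), 0]) :
    ∀ Q : Fin 4 → ℝ, ∀ j : Fin 4,
      ∑ i : Fin 4, fderiv ℝ η Q (Pi.single i 1) * Df Q i j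
        = fderiv ℝ q Q (Pi.single j 1) :=
  entropy_flux_compatibility_general α β δ hα hδ η q hη hq Df hDf
end

section
/- Let α, δ > 0 and 0 < β < 1. For a state Q = (p, u, c, v) ∈ ℝ⁴ with c ∈ [−1, 1], let Df(Q) be the 4×4 real matrix with rows (0, 1/α, 0, 0), (1, (3/2)u, G′(c), 0), (0, c, u, 1), (0, 0, (1/δ)(W″(c) + 1/β), 0), where G′(c) = c·W″(c) + c/β and W″(c) = 3c² − 1. Then Df(Q) is diagonalizable over ℝ: all its eigenvalues λ₁(Q), …, λ₄(Q) are real and there exist corresponding eigenvectors r₁(Q), …, r₄(Q) that span ℝ⁴ (equivalently, there exist an invertible real 4×4 matrix P and a real diagonal matrix D with Df(Q) = P D P⁻¹). -/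
/-!
Since `G′(c) = c K` with `K = W″(c) + 1/β`, and `K > 0` because `W″ ≥ -1 > -1/β`, the flux
Jacobian is symmetric for the weighted inner product `∑ wᵢ xᵢ yᵢ` with positive weights
`w = (α, 1, K, δ)`. Conjugating by `diag √w` turns it into a real symmetric matrix, to which the
spectral theorem applies.
-/

namespace Matrix

variable {n : Type*} [Fintype n] [DecidableEq n]

def IsRealDiagonalizable (A : Matrix n n ℝ) : Prop :=
  ∃ (P : Matrix n n ℝ) (D : n → ℝ), IsUnit P.det ∧ A = P * diagonal D * P⁻¹

theorem IsRealDiagonalizable.conj {A : Matrix n n ℝ} (hA : A.IsRealDiagonalizable)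
    {S : Matrix n n ℝ} (hS : IsUnit S.det) : (S * A * S⁻¹).IsRealDiagonalizable := by
  obtain ⟨P, D, hP, rfl⟩ := hA
  refine ⟨S * P, D, by simpa only [det_mul] using hS.mul hP, ?_⟩
  simp only [mul_inv_rev, Matrix.mul_assoc]

theorem IsHermitian.isRealDiagonalizable {A : Matrix n n ℝ} (hA : A.IsHermitian) :
    A.IsRealDiagonalizable := by
  set U : Matrix n n ℝ := ↑hA.eigenvectorUnitary
  have hUU : star U * U = 1 := (mem_unitaryGroup_iff').mp hA.eigenvectorUnitary.2
  refine ⟨U, hA.eigenvalues, isUnit_det_of_left_inverse hUU, ?_⟩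
  rw [inv_eq_left_inv hUU]
  simpa [Unitary.conjStarAlgAut_apply] using hA.spectral_theorem

theorem isRealDiagonalizable_of_weighted_symmetric {A : Matrix n n ℝ} {w : n → ℝ}
    (hw : ∀ i, 0 < w i) (hA : ∀ i j, w i * A i j = w j * A j i) :
    A.IsRealDiagonalizable := by
  set s : n → ℝ := fun i => √(w i)
  have hs : ∀ i, s i ≠ 0 := fun i => (Real.sqrt_pos.mpr (hw i)).ne'
  have hss : diagonal s * diagonal s⁻¹ = 1 := by
    rw [diagonal_mul_diagonal, ← diagonal_one]
    congr 1; funext i; exact mul_inv_cancel₀ (hs i)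
  have hsq : ∀ k, s k * s k = w k := fun k => Real.mul_self_sqrt (hw k).le
  have hM : (diagonal s * A * diagonal s⁻¹).IsHermitian := by
    ext i j
    simp only [conjTranspose_apply, star_trivial, mul_diagonal, diagonal_mul, Pi.inv_apply,
      ← div_eq_mul_inv]
    rw [div_eq_div_iff (hs i) (hs j)]
    linear_combination A j i * hsq j - A i j * hsq i - hA i j
  convert hM.isRealDiagonalizable.conj (isUnit_det_of_left_inverse hss)
  have hinv : (diagonal s⁻¹)⁻¹ = diagonal s := inv_eq_left_inv hss
  have hss' : diagonal s⁻¹ * diagonal s = 1 := mul_eq_one_comm.mp hss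
  simp only [hinv, Matrix.mul_assoc, hss', mul_one]
  simp only [← Matrix.mul_assoc, hss', one_mul]

end Matrix

theorem flux_jacobian_real_diagonalizable_general
    (α β δ : ℝ) (hα : 0 < α) (hδ : 0 < δ) (hβ0 : 0 < β) (hβ1 : β < 1)
    (u c : ℝ)
    (Df : Matrix (Fin 4) (Fin 4) ℝ)
    (hDf : Df =
      !![0, 1 / α, 0, 0;
         1, (3 / 2) * u, c * (3 * c ^ 2 - 1) + c / β, 0;
         0, c, u, 1;
         0, 0, (1 / δ) * ((3 * c ^ 2 - 1) + 1 / β), 0]) :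
    ∃ (P : Matrix (Fin 4) (Fin 4) ℝ) (D : Fin 4 → ℝ),
      IsUnit P.det ∧ Df = P * Matrix.diagonal D * P⁻¹ := by
  have hK : 0 < (3 * c ^ 2 - 1) + 1 / β := by
    have : 1 < 1 / β := one_lt_one_div hβ0 hβ1
    nlinarith [sq_nonneg c]
  have hw : ∀ i, 0 < ![α, 1, (3 * c ^ 2 - 1) + 1 / β, δ] i := by
    intro i; fin_cases i; exacts [hα, one_pos, hK, hδ]
  refine Matrix.isRealDiagonalizable_of_weighted_symmetric hw fun i j => ?_
  subst hDf
  fin_cases i <;> fin_cases j <;> simp <;> field_simp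

/-- Hyperbolicity of the one-dimensional first-order sub-system of the relaxed
friction-type approximation of the Navier–Stokes–Cahn–Hilliard system: for
`0 < β < 1` and any state `(p,u,c,v)` with `c ∈ [−1,1]`, the flux Jacobian
`Df(Q)` (with `W″(c) = 3c² − 1` and `G′(c) = c W″(c) + c/β`) is real
diagonalizable: `Df(Q) = P D P⁻¹` with `P` invertible and `D` real diagonal,
i.e. all eigenvalues are real with eigenvectors spanning `ℝ⁴`. -/
theorem flux_jacobian_real_diagonalizable
    (α β δ : ℝ) (hα : 0 < α) (hδ : 0 < δ) (hβ0 : 0 < β) (hβ1 : β < 1)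
    (p u c v : ℝ) (hc : c ∈ Set.Icc (-1 : ℝ) 1)
    (Df : Matrix (Fin 4) (Fin 4) ℝ)
    (hDf : Df =
      !![0, 1 / α, 0, 0;
         1, (3 / 2) * u, c * (3 * c ^ 2 - 1) + c / β, 0;
         0, c, u, 1;
         0, 0, (1 / δ) * ((3 * c ^ 2 - 1) + 1 / β), 0]) :
    ∃ (P : Matrix (Fin 4) (Fin 4) ℝ) (D : Fin 4 → ℝ),
      IsUnit P.det ∧ Df = P * Matrix.diagonal D * P⁻¹ :=
  flux_jacobian_real_diagonalizable_general α β δ hα hδ hβ0 hβ1 u c Df hDf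
end
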